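/- arXiv:0911.0257 — 2 statements merged into one kernel-verified Lean document; each statement's English description precedes it below -/
import Mathlib

section
/- The function F : S → ℝ defined on the unit simplex S = {c ∈ ℝᵏ : cᵢ ≥ 0, Σ cᵢ = 1} by F(c₁,…,c_k) = W_p^p(μ, Σᵢ cᵢ δ_{xᵢ}) (the p-th power of the Wasserstein distance from μ to the atomic measure with weights cᵢ at fixed points xᵢ) is convex in (c₁,…,c_k). -/
/-!
Couplings of `μ` with `a • ν₁ + b • ν₂` include the mixtures `a • γ₁ + b • γ₂` of couplings
`γᵢ` of `μ` with `νᵢ`, and the transport cost is linear in the coupling; hence the optimal cost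
is convex in the target measure. The target `Σᵢ cᵢ δ_{xᵢ}` is affine in `c`, and the optimal
cost is finite because the product coupling costs at most `(diam Ω)^p`, so convexity survives
the passage to `ℝ`.
-/

open MeasureTheory

/-- `W_p^p(μ, Σᵢ cᵢ δ_{xᵢ})` as a function of the weights `c`, defined via the
Kantorovich infimum over couplings. -/
noncomputable def WppAtomic {n k : ℕ} (μ : Measure (EuclideanSpace ℝ (Fin n)))
    (p : ℝ) (x : Fin k → EuclideanSpace ℝ (Fin n)) (c : Fin k → ℝ) : ℝ :=
  (sInf {I : ENNReal | ∃ γ : Measure (EuclideanSpace ℝ (Fin n) × EuclideanSpace ℝ (Fin n)),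
      γ.map Prod.fst = μ ∧
      γ.map Prod.snd = ∑ i : Fin k, ENNReal.ofReal (c i) • Measure.dirac (x i) ∧
      I = ∫⁻ q, ENNReal.ofReal (dist q.1 q.2 ^ p) ∂γ}).toReal

open scoped ENNReal

namespace MeasureTheory

theorem lintegral_dist_rpow_prod_le {α : Type*} [PseudoMetricSpace α] [MeasurableSpace α]
    {μ ν : Measure α} [IsProbabilityMeasure μ] [IsProbabilityMeasure ν] {s : Set α}
    (hs : Bornology.IsBounded s) (hμ : ∀ᵐ x ∂μ, x ∈ s) (hν : ∀ᵐ y ∂ν, y ∈ s) {p : ℝ}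
    (hp : 0 ≤ p) :
    ∫⁻ q, ENNReal.ofReal (dist q.1 q.2 ^ p) ∂(μ.prod ν) ≤ ENNReal.ofReal (Metric.diam s ^ p) := by
  have h_mem : ∀ᵐ q ∂(μ.prod ν), q.1 ∈ s ∧ q.2 ∈ s :=
    (Measure.quasiMeasurePreserving_fst.ae hμ).and (Measure.quasiMeasurePreserving_snd.ae hν)
  calc ∫⁻ q, ENNReal.ofReal (dist q.1 q.2 ^ p) ∂(μ.prod ν)
      ≤ ∫⁻ _, ENNReal.ofReal (Metric.diam s ^ p) ∂(μ.prod ν) := by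
        refine lintegral_mono_ae (h_mem.mono fun q hq => ENNReal.ofReal_le_ofReal ?_)
        exact Real.rpow_le_rpow dist_nonneg (Metric.dist_le_diam_of_mem hs hq.1 hq.2) hp
    _ = ENNReal.ofReal (Metric.diam s ^ p) := by simp

section Transport

variable {α β : Type*} [MeasurableSpace α] [MeasurableSpace β]

noncomputable def couplingCosts (μ : Measure α) (ν : Measure β) (cost : α × β → ℝ≥0∞) :
    Set ℝ≥0∞ :=
  {I | ∃ γ : Measure (α × β), γ.map Prod.fst = μ ∧ γ.map Prod.snd = ν ∧ I = ∫⁻ q, cost q ∂γ}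

noncomputable def transportCost (μ : Measure α) (ν : Measure β) (cost : α × β → ℝ≥0∞) :
    ℝ≥0∞ :=
  sInf (couplingCosts μ ν cost)

variable {μ : Measure α} {ν ν₁ ν₂ : Measure β} {cost : α × β → ℝ≥0∞}

theorem transportCost_le_lintegral_prod [IsProbabilityMeasure μ] [IsProbabilityMeasure ν] :
    transportCost μ ν cost ≤ ∫⁻ q, cost q ∂(μ.prod ν) :=
  sInf_le ⟨μ.prod ν, by simp, by simp, rfl⟩

theorem smul_add_smul_mem_couplingCosts {a b : ℝ≥0∞} (hab : a + b = 1) {I J : ℝ≥0∞}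
    (hI : I ∈ couplingCosts μ ν₁ cost) (hJ : J ∈ couplingCosts μ ν₂ cost) :
    a * I + b * J ∈ couplingCosts μ (a • ν₁ + b • ν₂) cost := by
  obtain ⟨γ₁, hγ₁μ, hγ₁ν, rfl⟩ := hI
  obtain ⟨γ₂, hγ₂μ, hγ₂ν, rfl⟩ := hJ
  refine ⟨a • γ₁ + b • γ₂, ?_, ?_, ?_⟩
  · rw [Measure.map_add _ _ measurable_fst, Measure.map_smul, Measure.map_smul, hγ₁μ, hγ₂μ,
      ← add_smul, hab, one_smul]
  · rw [Measure.map_add _ _ measurable_snd, Measure.map_smul, Measure.map_smul, hγ₁ν, hγ₂ν]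
  · rw [lintegral_add_measure, lintegral_smul_measure, lintegral_smul_measure, smul_eq_mul,
      smul_eq_mul]

theorem transportCost_smul_add_smul_le {a b : ℝ≥0∞} (ha : a ≠ 0) (hb : b ≠ 0) (hab : a + b = 1) :
    transportCost μ (a • ν₁ + b • ν₂) cost ≤
      a * transportCost μ ν₁ cost + b * transportCost μ ν₂ cost := by
  have ha_top : a ≠ ∞ := ne_top_of_le_ne_top ENNReal.one_ne_top (hab ▸ le_self_add)
  have hb_top : b ≠ ∞ := ne_top_of_le_ne_top ENNReal.one_ne_top (hab ▸ le_add_self)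
  simp only [transportCost, sInf_eq_iInf, ENNReal.mul_iInf_of_ne ha ha_top,
    ENNReal.mul_iInf_of_ne hb hb_top]
  exact ENNReal.le_iInf₂_add_iInf₂ fun I hI J hJ =>
    iInf₂_le _ (smul_add_smul_mem_couplingCosts hab hI hJ)

end Transport

section Atomic

variable {α ι : Type*} [MeasurableSpace α] [Fintype ι]

noncomputable def atomicMeasure (x : ι → α) (c : ι → ℝ) : Measure α :=
  ∑ i, ENNReal.ofReal (c i) • Measure.dirac (x i)

theorem isProbabilityMeasure_atomicMeasure (x : ι → α) {c : ι → ℝ}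
    (hc : c ∈ stdSimplex ℝ ι) : IsProbabilityMeasure (atomicMeasure x c) := by
  constructor
  simp only [atomicMeasure, Measure.coe_finsetSum, Finset.sum_apply, Measure.coe_smul,
    Pi.smul_apply, measure_univ, smul_eq_mul, mul_one]
  rw [← ENNReal.ofReal_sum_of_nonneg fun i _ => hc.1 i, hc.2, ENNReal.ofReal_one]

theorem ae_mem_atomicMeasure [MeasurableSingletonClass α] {x : ι → α} {s : Set α}
    (hx : ∀ i, x i ∈ s) (c : ι → ℝ) : ∀ᵐ y ∂(atomicMeasure x c), y ∈ s := by
  rw [ae_iff]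
  simp [atomicMeasure, Measure.dirac_apply, hx]

theorem atomicMeasure_smul_add_smul (x : ι → α) {c d : ι → ℝ} (hc : 0 ≤ c) (hd : 0 ≤ d)
    {a b : ℝ} (ha : 0 ≤ a) (hb : 0 ≤ b) :
    atomicMeasure x (a • c + b • d) =
      ENNReal.ofReal a • atomicMeasure x c + ENNReal.ofReal b • atomicMeasure x d := by
  simp only [atomicMeasure, Finset.smul_sum, smul_smul, ← Finset.sum_add_distrib, ← add_smul,
    Pi.add_apply, Pi.smul_apply, smul_eq_mul, ← ENNReal.ofReal_mul ha, ← ENNReal.ofReal_mul hb,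
    ← ENNReal.ofReal_add (mul_nonneg ha (hc _)) (mul_nonneg hb (hd _))]

theorem transportCost_dist_rpow_atomicMeasure_ne_top [PseudoMetricSpace α]
    [MeasurableSingletonClass α] {μ : Measure α} [IsProbabilityMeasure μ] {s : Set α}
    (hs : Bornology.IsBounded s) (hμ : ∀ᵐ y ∂μ, y ∈ s) {x : ι → α} (hx : ∀ i, x i ∈ s)
    {c : ι → ℝ} (hc : c ∈ stdSimplex ℝ ι) {p : ℝ} (hp : 0 ≤ p) :
    transportCost μ (atomicMeasure x c) (fun q => ENNReal.ofReal (dist q.1 q.2 ^ p)) ≠ ∞ :=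
  have := isProbabilityMeasure_atomicMeasure x hc
  ne_top_of_le_ne_top ENNReal.ofReal_ne_top <| transportCost_le_lintegral_prod.trans <|
    lintegral_dist_rpow_prod_le hs hμ (ae_mem_atomicMeasure hx c) hp

end Atomic

end MeasureTheory

/-- The function `F(c) = W_p^p(μ, Σᵢ cᵢ δ_{xᵢ})` is convex on the unit simplex. -/
theorem WppAtomic_convexOn
    {n k : ℕ} (Ω : Set (EuclideanSpace ℝ (Fin n))) (hΩ : IsCompact Ω)
    (p : ℝ) (hp : 1 ≤ p)
    (μ : Measure (EuclideanSpace ℝ (Fin n))) [IsProbabilityMeasure μ] (hμΩ : μ Ω = 1)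
    (x : Fin k → EuclideanSpace ℝ (Fin n)) (hx : ∀ i, x i ∈ Ω) :
    ConvexOn ℝ (stdSimplex ℝ (Fin k)) (WppAtomic μ p x) := by
  refine convexOn_iff_forall_pos.mpr ⟨convex_stdSimplex ℝ (Fin k), ?_⟩
  intro c hc d hd a b ha hb hab
  set T := fun c => transportCost μ (atomicMeasure x c)
    (fun q => ENNReal.ofReal (dist q.1 q.2 ^ p))
  have hμ : ∀ᵐ y ∂μ, y ∈ Ω :=
    (ae_mem_iff_measure_eq hΩ.measurableSet.nullMeasurableSet).mpr (by rw [hμΩ, measure_univ])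
  have hT_ne_top {c} (hc : c ∈ stdSimplex ℝ (Fin k)) : T c ≠ ∞ :=
    transportCost_dist_rpow_atomicMeasure_ne_top hΩ.isBounded hμ hx hc (by linarith)
  have hTc : ENNReal.ofReal a * T c ≠ ∞ := ENNReal.mul_ne_top ENNReal.ofReal_ne_top (hT_ne_top hc)
  have hTd : ENNReal.ofReal b * T d ≠ ∞ := ENNReal.mul_ne_top ENNReal.ofReal_ne_top (hT_ne_top hd)
  have hT_le : T (a • c + b • d) ≤ ENNReal.ofReal a * T c + ENNReal.ofReal b * T d := by
    simp only [T, atomicMeasure_smul_add_smul x hc.1 hd.1 ha.le hb.le]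
    refine transportCost_smul_add_smul_le (by simpa using ha) (by simpa using hb) ?_
    rw [← ENNReal.ofReal_add ha.le hb.le, hab, ENNReal.ofReal_one]
  calc WppAtomic μ p x (a • c + b • d) = (T (a • c + b • d)).toReal := rfl
    _ ≤ (ENNReal.ofReal a * T c + ENNReal.ofReal b * T d).toReal :=
      ENNReal.toReal_mono (ENNReal.add_ne_top.mpr ⟨hTc, hTd⟩) hT_le
    _ = a • WppAtomic μ p x c + b • WppAtomic μ p x d := by
      rw [ENNReal.toReal_add hTc hTd, ENNReal.toReal_mul, ENNReal.toReal_mul,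
        ENNReal.toReal_ofReal ha.le, ENNReal.toReal_ofReal hb.le]
      rfl
end

section
/- Consider Ω = [0,1], uniform density, two locations x₁ = 0, x₂ = 1, cost c(x,xᵢ) = |x − xᵢ| plus congestion costs s₁ ≡ 100 and s₂(t) = 0 for t ≤ 0.999, s₂(t) = 1 for t > 0.999. Then the cell configuration C₁ = ∅, C₂ = [0,1] is a Wardrop equilibrium (no user at any x can strictly decrease its individual cost |x − xᵢ| + sᵢ(Nᵢ) by switching), while the total-cost-minimizing configuration assigns a nonempty set to C₁; hence the equilibrium total cost strictly exceeds the optimal total cost. -/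
open MeasureTheory

/-- Congestion cost of station 2. -/
noncomputable def s₂ (t : ℝ) : ℝ := if t ≤ 0.999 then 0 else 1

/-- Congestion cost of station 1. -/
noncomputable def s₁ (_t : ℝ) : ℝ := 100

/-- Total cost of a configuration `(C₁, C₂)` on `[0,1]` with stations at `0`, `1`. -/
noncomputable def totalCost (C₁ C₂ : Set ℝ) : ℝ :=
  (∫ x in C₁, (|x - 0| + s₁ ((volume C₁).toReal))) +
    (∫ x in C₂, (|x - 1| + s₂ ((volume C₂).toReal)))

/-! With everybody at station 2 its congestion cost is 1, so every user pays at most 2 there,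
far below the fixed cost 100 of station 1: no user gains by switching. Yet the congestion cost of
station 2 drops to 0 as soon as a mass 1/1000 of users leaves it. Sending the users of
`[0, 1/1000]` to station 1 costs them about 1/10 extra in total and saves 1 to each of the
remaining users, so the total cost falls from 3/2 to about 6/10. -/

open Set

lemma s₂_le_one (t : ℝ) : s₂ t ≤ 1 := by
  unfold s₂
  split_ifs <;> norm_num

lemma s₂_eq_zero {t : ℝ} (ht : t ≤ 0.999) : s₂ t = 0 := if_pos ht

lemma s₂_eq_one {t : ℝ} (ht : 0.999 < t) : s₂ t = 1 := if_neg ht.not_ge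

lemma integral_Icc_abs_sub_left_add_const {a b : ℝ} (hab : a ≤ b) (k : ℝ) :
    ∫ x in Icc a b, (|x - a| + k) = (b - a) ^ 2 / 2 + k * (b - a) := by
  have hcongr : ∀ x ∈ Ioc a b, |x - a| + k = x - a + k := fun x hx => by
    rw [abs_of_nonneg (by linarith [hx.1])]
  rw [integral_Icc_eq_integral_Ioc, setIntegral_congr_fun measurableSet_Ioc hcongr,
    ← intervalIntegral.integral_of_le hab]
  simp
  ring

lemma integral_Icc_abs_sub_right_add_const {a b : ℝ} (hab : a ≤ b) (k : ℝ) :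
    ∫ x in Icc a b, (|x - b| + k) = (b - a) ^ 2 / 2 + k * (b - a) := by
  have hcongr : ∀ x ∈ Ioc a b, |x - b| + k = b + k - x := fun x hx => by
    rw [abs_of_nonpos (by linarith [hx.2])]; ring
  rw [integral_Icc_eq_integral_Ioc, setIntegral_congr_fun measurableSet_Ioc hcongr,
    ← intervalIntegral.integral_of_le hab,
    intervalIntegral.integral_sub intervalIntegrable_const intervalIntegral.intervalIntegrable_id]
  simp
  ring

lemma totalCost_empty_Icc : totalCost ∅ (Icc 0 1) = 3 / 2 := by
  rw [totalCost, setIntegral_empty, Real.volume_Icc, sub_zero, ENNReal.ofReal_one,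
    ENNReal.toReal_one, s₂_eq_one (by norm_num), integral_Icc_abs_sub_right_add_const zero_le_one]
  norm_num

lemma totalCost_Icc_Ioc {t : ℝ} (h₀ : 0 ≤ t) (h₁ : t ≤ 1) :
    totalCost (Icc 0 t) (Ioc t 1) =
      t ^ 2 / 2 + 100 * t + ((1 - t) ^ 2 / 2 + s₂ (1 - t) * (1 - t)) := by
  rw [totalCost, Real.volume_Icc, Real.volume_Ioc, ENNReal.toReal_ofReal (by linarith),
    ENNReal.toReal_ofReal (by linarith), ← integral_Icc_eq_integral_Ioc,
    integral_Icc_abs_sub_left_add_const h₀, integral_Icc_abs_sub_right_add_const h₁, s₁]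
  ring

/-- The configuration `C₁ = ∅`, `C₂ = [0,1]` is a Wardrop equilibrium (no user
can strictly reduce its individual cost by switching stations), but its total
cost strictly exceeds the total cost of some other partition of `[0,1]`
(which assigns a nonempty cell to station 1); hence the equilibrium is
strictly suboptimal. -/
theorem wardrop_equilibrium_suboptimal :
    (∀ x ∈ Set.Icc (0:ℝ) 1,
        |x - 1| + s₂ ((volume (Set.Icc (0:ℝ) 1)).toReal) ≤
          |x - 0| + s₁ ((volume (∅ : Set ℝ)).toReal)) ∧
    ∃ C₁ C₂ : Set ℝ, MeasurableSet C₁ ∧ MeasurableSet C₂ ∧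
      Disjoint C₁ C₂ ∧ C₁ ∪ C₂ = Set.Icc (0:ℝ) 1 ∧ C₁.Nonempty ∧
      totalCost C₁ C₂ < totalCost (∅ : Set ℝ) (Set.Icc (0:ℝ) 1) := by
  refine ⟨fun x hx => ?_, Icc 0 (1 / 1000), Ioc (1 / 1000) 1, measurableSet_Icc,
    measurableSet_Ioc, (Iic_disjoint_Ioi le_rfl).mono Icc_subset_Iic_self Ioc_subset_Ioi_self,
    Icc_union_Ioc_eq_Icc (by norm_num) (by norm_num),
    nonempty_Icc.mpr (by norm_num), ?_⟩
  · have h_dist : |x - 1| ≤ 1 := abs_le.mpr ⟨by linarith [hx.1], by linarith [hx.2]⟩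
    linarith [s₂_le_one ((volume (Icc (0:ℝ) 1)).toReal), abs_nonneg (x - 0),
      show s₁ (volume (∅ : Set ℝ)).toReal = 100 from rfl]
  · rw [totalCost_Icc_Ioc (by norm_num) (by norm_num), s₂_eq_zero (by norm_num),
      totalCost_empty_Icc]
    norm_num
end
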